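/- arXiv:2001.04731 — 3 statements merged into one kernel-verified Lean document; each statement's English description precedes it below -/
import Mathlib

section
/- Let p be a nonzero point of the Euclidean plane ℝ² and let λ be a real number with 0 < λ < 1. Then for every nonzero point m with ‖m − p‖ = λ‖m‖, the angle between the vectors m and p (both viewed from the origin) is at most arcsin λ. In other words, every possible interception point lies within the cone of half-angle arcsin λ around the direction from the evader to the pursuer, so the occupied angle of the pursuer equals θ = 2·arcsin λ. -/
/-!
Squaring `‖m - p‖ = λ‖m‖` gives `2⟪m, p⟫ = (1 - λ²)‖m‖² + ‖p‖²`, and AM-GM bounds the right-hand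
side below by `2√(1 - λ²)‖m‖‖p‖`. Hence `cos ∠(m, p) ≥ √(1 - λ²) = cos (arcsin λ)`.
-/

open InnerProductGeometry Real RealInnerProductSpace

section

variable {V : Type*} [NormedAddCommGroup V] [InnerProductSpace ℝ V]

lemma two_mul_inner_eq_of_norm_sub_eq_mul_norm {x y : V} {l : ℝ} (h : ‖x - y‖ = l * ‖x‖) :
    2 * ⟪x, y⟫ = (1 - l ^ 2) * ‖x‖ ^ 2 + ‖y‖ ^ 2 := by
  have hsq := norm_sub_sq_real x y
  rw [h] at hsq
  linear_combination hsq

lemma sqrt_one_sub_sq_mul_le_inner_of_norm_sub_eq_mul_norm {x y : V} {l : ℝ}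
    (h : ‖x - y‖ = l * ‖x‖) (hl : l ^ 2 ≤ 1) :
    √(1 - l ^ 2) * (‖x‖ * ‖y‖) ≤ ⟪x, y⟫ := by
  have hc : √(1 - l ^ 2) ^ 2 = 1 - l ^ 2 := sq_sqrt (by linarith)
  have hamgm := two_mul_le_add_sq (√(1 - l ^ 2) * ‖x‖) ‖y‖
  rw [mul_pow, hc, ← two_mul_inner_eq_of_norm_sub_eq_mul_norm h] at hamgm
  linarith

lemma angle_le_arccos_of_mul_le_inner {x y : V} (hx : x ≠ 0) (hy : y ≠ 0) {c : ℝ}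
    (h : c * (‖x‖ * ‖y‖) ≤ ⟪x, y⟫) : angle x y ≤ arccos c := by
  have hxy : 0 < ‖x‖ * ‖y‖ := mul_pos (norm_pos_iff.mpr hx) (norm_pos_iff.mpr hy)
  exact arccos_le_arccos ((le_div_iff₀ hxy).mpr h)

end

/-- Every possible interception point `m` (with `‖m - p‖ = λ‖m‖`) lies within the cone of
half-angle `arcsin λ` around the direction from the evader (at the origin) to the pursuer
(at `p`); hence the occupied angle of the pursuer equals `2 · arcsin λ`. -/
theorem occupied_angle (p : EuclideanSpace ℝ (Fin 2)) (hp : p ≠ 0)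
    (l : ℝ) (hl0 : 0 < l) (hl1 : l < 1)
    (m : EuclideanSpace ℝ (Fin 2)) (hm : m ≠ 0) (h : ‖m - p‖ = l * ‖m‖) :
    InnerProductGeometry.angle m p ≤ Real.arcsin l := by
  have hl : l ^ 2 ≤ 1 := by nlinarith
  calc angle m p ≤ arccos √(1 - l ^ 2) :=
        angle_le_arccos_of_mul_le_inner hm hp
          (sqrt_one_sub_sq_mul_le_inner_of_norm_sub_eq_mul_norm h hl)
    _ = arcsin l := (arcsin_eq_arccos hl0.le).symm
end

section
/- Let ε : ℝ → (ZMod n → ℝ) be differentiable with ε'(t) = −(M *ᵥ ε(t)) for every t. Then the system reaches consensus at the average of the initial values: for every index i, εᵢ(t) tends to (1/n)·∑ⱼ εⱼ(0) as t → ∞. -/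
/-!
The sum `∑ εᵢ` is conserved because every column of `M` sums to zero, and `M` kills constants,
so the deviation `y = ε - c·𝟙` from the average `c` again solves `ẏ = -M y` and has mean zero.
On mean-zero vectors the energy `⟪x, M x⟫ = ∑ kᵢ₊₁ (xᵢ - xᵢ₊₁)²` vanishes only at `0`, hence by
compactness of the unit sphere it dominates `λ ‖x‖²` for some `λ > 0`. Then `|y|²` decays like
`e^{-2λt}`.
-/

open Matrix Filter

/-- The weighted cycle Laplacian matrix of the encirclement algorithm:
`M i i = k i + k (i+1)`, `M i (i-1) = -k i`, `M i (i+1) = -k (i+1)`, and `0` otherwise. -/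
def cycLap (n : ℕ) (k : ZMod n → ℝ) : Matrix (ZMod n) (ZMod n) ℝ :=
  Matrix.of fun i j =>
    if j = i then k i + k (i + 1)
    else if j = i - 1 then -k i
    else if j = i + 1 then -k (i + 1)
    else 0

open Topology

theorem exists_pos_mul_norm_sq_le {E : Type*} [NormedAddCommGroup E] [NormedSpace ℝ E]
    [FiniteDimensional ℝ E] {q : E → ℝ} (hq : Continuous q)
    (hsmul : ∀ (c : ℝ) x, q (c • x) = c ^ 2 * q x) (hpos : ∀ x, x ≠ 0 → 0 < q x) :
    ∃ l > 0, ∀ x, l * ‖x‖ ^ 2 ≤ q x := by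
  obtain ⟨l, hl, hsphere⟩ := (isCompact_sphere (0 : E) 1).exists_forall_le' hq.continuousOn
    fun u hu => hpos u (ne_zero_of_mem_unit_sphere ⟨u, hu⟩)
  refine ⟨l, hl, fun x => ?_⟩
  rcases eq_or_ne x 0 with rfl | hx
  · have : q 0 = 0 := by simpa using hsmul 0 0
    simp [this]
  have hx' : ‖x‖ ≠ 0 := norm_ne_zero_iff.mpr hx
  have hu : ‖x‖⁻¹ • x ∈ Metric.sphere (0 : E) 1 := by
    simp [norm_smul, hx]
  calc l * ‖x‖ ^ 2 ≤ q (‖x‖⁻¹ • x) * ‖x‖ ^ 2 := by gcongr; exact hsphere _ hu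
    _ = q x := by rw [hsmul]; field_simp

theorem HasDerivAt.dotProduct {𝕜 ι : Type*} [NontriviallyNormedField 𝕜] [Fintype ι]
    {f g : 𝕜 → ι → 𝕜} {f' g' : ι → 𝕜} {t : 𝕜} (hf : HasDerivAt f f' t) (hg : HasDerivAt g g' t) :
    HasDerivAt (fun s => f s ⬝ᵥ g s) (f' ⬝ᵥ g t + f t ⬝ᵥ g') t := by
  simp only [_root_.dotProduct, ← Finset.sum_add_distrib]
  exact HasDerivAt.fun_sum fun i _ => (hasDerivAt_pi.mp hf i).fun_mul (hasDerivAt_pi.mp hg i)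

theorem tendsto_zero_of_hasDerivAt_le_neg_mul {V V' : ℝ → ℝ} {a : ℝ} (ha : 0 < a)
    (hV : ∀ t, HasDerivAt V (V' t) t) (hV' : ∀ t, V' t ≤ -a * V t) (hnonneg : ∀ t, 0 ≤ V t) :
    Tendsto V atTop (𝓝 0) := by
  have hanti : Antitone fun t => V t * Real.exp (a * t) := by
    have hderiv (t : ℝ) : HasDerivAt (fun s => V s * Real.exp (a * s))
        (V' t * Real.exp (a * t) + V t * (Real.exp (a * t) * a)) t :=
      (hV t).mul (((hasDerivAt_id t).const_mul a).exp.congr_deriv (by simp))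
    refine antitone_of_deriv_nonpos (fun t => (hderiv t).differentiableAt) fun t => ?_
    rw [(hderiv t).deriv]
    nlinarith [hV' t, Real.exp_pos (a * t)]
  have hbound (t : ℝ) (ht : 0 ≤ t) : V t ≤ V 0 * Real.exp (-(a * t)) := by
    have := hanti ht
    simp only [mul_zero, Real.exp_zero, mul_one] at this
    rw [Real.exp_neg, ← div_eq_mul_inv, le_div_iff₀ (Real.exp_pos _)]
    exact this
  have hexp : Tendsto (fun t => V 0 * Real.exp (-(a * t))) atTop (𝓝 0) := by
    simpa using (Real.tendsto_exp_atBot.comp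
      (tendsto_neg_atTop_atBot.comp (tendsto_id.const_mul_atTop ha))).const_mul (V 0)
  exact tendsto_of_tendsto_of_tendsto_of_le_of_le' tendsto_const_nhds hexp
    (Eventually.of_forall hnonneg) (eventually_atTop.mpr ⟨0, hbound⟩)

theorem tendsto_apply_of_tendsto_dotProduct_self {α ι : Type*} [Fintype ι] {l : Filter α}
    {y : α → ι → ℝ} (h : Tendsto (fun t => y t ⬝ᵥ y t) l (𝓝 0)) (i : ι) :
    Tendsto (fun t => y t i) l (𝓝 0) := by
  refine squeeze_zero_norm (fun t => Real.abs_le_sqrt ?_) (by simpa using h.sqrt)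
  simpa [dotProduct, sq] using
    Finset.single_le_sum (fun j _ => mul_self_nonneg (y t j)) (Finset.mem_univ i)

theorem tendsto_zero_of_hasDerivAt_neg_mulVec {ι : Type*} [Fintype ι] {A : Matrix ι ι ℝ}
    {y : ℝ → ι → ℝ} {l : ℝ} (hl : 0 < l) (hy : ∀ t, HasDerivAt y (-(A *ᵥ y t)) t)
    (hA : ∀ t, l * (y t ⬝ᵥ y t) ≤ y t ⬝ᵥ (A *ᵥ y t)) (i : ι) :
    Tendsto (fun t => y t i) atTop (𝓝 0) := by
  refine tendsto_apply_of_tendsto_dotProduct_self ?_ i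
  refine tendsto_zero_of_hasDerivAt_le_neg_mul (mul_pos two_pos hl)
    (fun t => (hy t).dotProduct (hy t)) (fun t => ?_) fun t => ?_
  · rw [neg_dotProduct, dotProduct_neg, dotProduct_comm]
    linarith [hA t]
  · exact Finset.sum_nonneg fun j _ => mul_self_nonneg _

theorem sum_eq_of_hasDerivAt_neg_mulVec {ι : Type*} [Fintype ι] {A : Matrix ι ι ℝ}
    (hA : ∀ x, ∑ i, (A *ᵥ x) i = 0) {y : ℝ → ι → ℝ} (hy : ∀ t, HasDerivAt y (-(A *ᵥ y t)) t)
    (t : ℝ) : ∑ i, y t i = ∑ i, y 0 i := by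
  have hderiv (s : ℝ) : HasDerivAt (fun s => ∑ i, y s i) 0 s := by
    simpa [hA] using HasDerivAt.fun_sum fun i (_ : i ∈ Finset.univ) => hasDerivAt_pi.mp (hy s) i
  exact is_const_of_deriv_eq_zero (fun s => (hderiv s).differentiableAt)
    (fun s => (hderiv s).deriv) t 0

theorem ZMod.natCast_ne_zero_of_pos_of_lt {m n : ℕ} (h0 : 0 < m) (h : m < n) :
    (m : ZMod n) ≠ 0 := by
  rw [Ne, ZMod.natCast_eq_zero_iff]
  exact Nat.not_dvd_of_pos_of_lt h0 h

theorem ZMod.apply_eq_apply_zero_of_apply_add_one {n : ℕ} [NeZero n] {α : Type*} {x : ZMod n → α}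
    (h : ∀ i, x (i + 1) = x i) (j : ZMod n) : x j = x 0 := by
  have hnat : ∀ m : ℕ, x m = x 0 := by
    intro m
    induction m with
    | zero => simp
    | succ m ih => rw [Nat.cast_succ, h, ih]
  simpa using hnat j.val

section CycleLaplacian

variable {n : ℕ} [NeZero n]

theorem cycLap_mulVec_apply (hn : 3 ≤ n) (k x : ZMod n → ℝ) (i : ZMod n) :
    (cycLap n k *ᵥ x) i = k i * (x i - x (i - 1)) + k (i + 1) * (x i - x (i + 1)) := by
  have h1 : (1 : ZMod n) ≠ 0 := by
    exact_mod_cast ZMod.natCast_ne_zero_of_pos_of_lt one_pos (by omega)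
  have h2 : (2 : ZMod n) ≠ 0 := by
    exact_mod_cast ZMod.natCast_ne_zero_of_pos_of_lt two_pos (by omega)
  have hl : i - 1 ≠ i := fun h => h1 (by linear_combination -h)
  have hr : i + 1 ≠ i := fun h => h1 (by linear_combination h)
  have hlr : i + 1 ≠ i - 1 := fun h => h2 (by linear_combination h)
  have hrow : (fun j => cycLap n k i j) = Pi.single i (k i + k (i + 1)) +
      Pi.single (i - 1) (-k i) + Pi.single (i + 1) (-k (i + 1)) := by
    ext j
    simp only [cycLap, of_apply, Pi.add_apply, Pi.single_apply]
    split_ifs <;> simp_all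
  rw [mulVec, hrow]
  simp only [add_dotProduct, single_dotProduct]
  ring

theorem sum_cycLap_mulVec (hn : 3 ≤ n) (k x : ZMod n → ℝ) : ∑ i, (cycLap n k *ᵥ x) i = 0 := by
  have hshift : ∑ i, k (i + 1) * (x (i + 1) - x i) = ∑ i, k i * (x i - x (i - 1)) := by
    simpa using Equiv.sum_comp (Equiv.addRight (1 : ZMod n)) fun i => k i * (x i - x (i - 1))
  simp only [cycLap_mulVec_apply hn]
  rw [Finset.sum_add_distrib, ← hshift, ← Finset.sum_add_distrib]
  exact Finset.sum_eq_zero fun i _ => by ring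

theorem cycLap_mulVec_const (hn : 3 ≤ n) (k : ZMod n → ℝ) (c : ℝ) :
    cycLap n k *ᵥ Function.const _ c = 0 := by
  ext i
  simp [cycLap_mulVec_apply hn]

theorem dotProduct_cycLap_mulVec (hn : 3 ≤ n) (k x : ZMod n → ℝ) :
    x ⬝ᵥ (cycLap n k *ᵥ x) = ∑ i, k (i + 1) * (x i - x (i + 1)) ^ 2 := by
  have hshift : ∑ i, x (i + 1) * (k (i + 1) * (x (i + 1) - x i)) =
      ∑ i, x i * (k i * (x i - x (i - 1))) := by
    simpa using
      Equiv.sum_comp (Equiv.addRight (1 : ZMod n)) fun i => x i * (k i * (x i - x (i - 1)))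
  simp only [dotProduct, cycLap_mulVec_apply hn, mul_add]
  rw [Finset.sum_add_distrib, ← hshift, ← Finset.sum_add_distrib]
  exact Finset.sum_congr rfl fun i _ => by ring

theorem apply_eq_apply_zero_of_dotProduct_cycLap_mulVec_eq_zero (hn : 3 ≤ n) {k : ZMod n → ℝ}
    (hk : ∀ i, 0 < k i) {x : ZMod n → ℝ} (hx : x ⬝ᵥ (cycLap n k *ᵥ x) = 0) (j : ZMod n) :
    x j = x 0 := by
  rw [dotProduct_cycLap_mulVec hn, Finset.sum_eq_zero_iff_of_nonneg
    fun i _ => mul_nonneg (hk _).le (sq_nonneg _)] at hx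
  refine ZMod.apply_eq_apply_zero_of_apply_add_one (fun i => ?_) j
  have := hx i (Finset.mem_univ _)
  rw [mul_eq_zero, or_iff_right (hk _).ne', sq_eq_zero_iff, sub_eq_zero] at this
  exact this.symm

theorem exists_pos_mul_dotProduct_self_le_cycLap (hn : 3 ≤ n) {k : ZMod n → ℝ} (hk : ∀ i, 0 < k i) :
    ∃ l > 0, ∀ x : ZMod n → ℝ, ∑ i, x i = 0 → l * (x ⬝ᵥ x) ≤ x ⬝ᵥ (cycLap n k *ᵥ x) := by
  have henergy (x : ZMod n → ℝ) : 0 ≤ x ⬝ᵥ (cycLap n k *ᵥ x) := by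
    rw [dotProduct_cycLap_mulVec hn]
    exact Finset.sum_nonneg fun i _ => mul_nonneg (hk _).le (sq_nonneg _)
  have hkernel (x : ZMod n → ℝ) (hsum : ∑ i, x i = 0) (hx : x ⬝ᵥ (cycLap n k *ᵥ x) = 0) :
      x = 0 := by
    have hconst := apply_eq_apply_zero_of_dotProduct_cycLap_mulVec_eq_zero hn hk hx
    simp only [hconst, Finset.sum_const, Finset.card_univ, ZMod.card, nsmul_eq_mul,
      mul_eq_zero, Nat.cast_eq_zero, NeZero.ne n, false_or] at hsum
    ext j
    rw [hconst, hsum, Pi.zero_apply]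
  -- The mass term makes the form positive definite on the whole space.
  obtain ⟨l, hl, hcoer⟩ := exists_pos_mul_norm_sq_le
    (q := fun x : ZMod n → ℝ => x ⬝ᵥ (cycLap n k *ᵥ x) + (∑ i, x i) ^ 2) (by fun_prop)
    (fun c x => by simp only [mulVec_smul, dotProduct_smul, smul_dotProduct, Pi.smul_apply,
      smul_eq_mul, ← Finset.mul_sum]; ring)
    (fun x hx => by
      by_contra! hle
      have hsum : ∑ i, x i = 0 := by nlinarith [henergy x]
      exact hx (hkernel x hsum (by nlinarith [henergy x])))
  refine ⟨l / n, by positivity, fun x hsum => ?_⟩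
  have hnorm : x ⬝ᵥ x ≤ n * ‖x‖ ^ 2 := calc
    x ⬝ᵥ x = ∑ i, ‖x i‖ ^ 2 := by simp [dotProduct, sq]
    _ ≤ ∑ _i : ZMod n, ‖x‖ ^ 2 := by gcongr; exact norm_le_pi_norm x _
    _ = n * ‖x‖ ^ 2 := by simp
  have hn0 : (0 : ℝ) < n := by positivity
  calc l / n * (x ⬝ᵥ x) ≤ l * ‖x‖ ^ 2 := by
        rw [div_mul_eq_mul_div, div_le_iff₀ hn0]; nlinarith
    _ ≤ x ⬝ᵥ (cycLap n k *ᵥ x) := by simpa [hsum] using hcoer x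

end CycleLaplacian

/-- Any solution of `ε̇ = -Mε` reaches consensus at the average of the initial values:
each coordinate `ε i (t)` tends to `(1/n) ∑ j, ε j (0)` as `t → ∞`. -/
theorem coverage_angles_consensus (n : ℕ) (hn : 3 ≤ n) [NeZero n]
    (k : ZMod n → ℝ) (hk : ∀ i, 0 < k i) (ε : ℝ → ZMod n → ℝ)
    (hε : ∀ t, HasDerivAt ε (-(cycLap n k *ᵥ ε t)) t) :
    ∀ i, Tendsto (fun t => ε t i) atTop (nhds ((∑ j, ε 0 j) / n)) := by
  intro i
  set c := (∑ j, ε 0 j) / n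
  set y : ℝ → ZMod n → ℝ := fun t => ε t - Function.const _ c
  have hy (t : ℝ) : HasDerivAt y (-(cycLap n k *ᵥ y t)) t := by
    simpa [y, mulVec_sub, cycLap_mulVec_const hn] using (hε t).sub_const (Function.const _ c)
  have hmean (t : ℝ) : ∑ j, y t j = 0 := by
    have hcons := sum_eq_of_hasDerivAt_neg_mulVec (sum_cycLap_mulVec hn k) hε t
    simp [y, c, Finset.sum_sub_distrib, hcons, mul_div_cancel₀ _ (NeZero.ne (n : ℝ))]
  obtain ⟨l, hl, hgap⟩ := exists_pos_mul_dotProduct_self_le_cycLap hn hk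
  have hy0 := tendsto_zero_of_hasDerivAt_neg_mulVec hl hy (fun t => hgap _ (hmean t)) i
  simpa [y] using hy0.add_const c
end

section
/- (Lemma 1 of the paper.) Let e, p₁, p₂ be points of the Euclidean plane ℝ², let d_c > 0, and let λ₁, λ₂ ∈ (0,1). Suppose dist(e, p₁) ≥ d_c, dist(e, p₂) ≥ d_c, and dist(p₁, p₂) ≤ 2·d_c·min(λ₁, λ₂). Then the angle ∠ p₁ e p₂ satisfies ∠ p₁ e p₂ ≤ 2·arcsin λ₁ and ∠ p₁ e p₂ ≤ 2·arcsin λ₂; in particular the coverage angle ε = ∠ p₁ e p₂ − (arcsin λ₁ + arcsin λ₂) is nonpositive. -/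
open Real EuclideanGeometry

lemma angle_le_two_arcsin (e p₁ p₂ : EuclideanSpace ℝ (Fin 2)) (dc l : ℝ) (hdc : 0 < dc)
    (hl : 0 < l) (hl' : l < 1)
    (h₁ : dc ≤ dist e p₁) (h₂ : dc ≤ dist e p₂) (h₁₂ : dist p₁ p₂ ≤ 2 * dc * l) :
    ∠ p₁ e p₂ ≤ 2 * arcsin l := by
  set a := dist e p₁ with ha'
  set b := dist e p₂ with hb'
  set c := dist p₁ p₂ with hc'
  have ha : 0 < a := lt_of_lt_of_le hdc h₁
  have hb : 0 < b := lt_of_lt_of_le hdc h₂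
  have hc0 : 0 ≤ c := dist_nonneg
  have hlaw := EuclideanGeometry.law_cos p₁ e p₂
  rw [dist_comm p₁ e, dist_comm p₂ e] at hlaw
  have hcsq : c ^ 2 ≤ (2 * dc * l) ^ 2 := by
    have h2 : 0 ≤ 2 * dc * l := by positivity
    nlinarith
  have hcos : 1 - 2 * l ^ 2 ≤ Real.cos (∠ p₁ e p₂) := by
    nlinarith [sq_nonneg (a - b), mul_pos ha hb, sq_nonneg c,
      mul_le_mul h₁ h₂ hdc.le ha.le, sq_nonneg l]
  have hcos2 : Real.cos (2 * arcsin l) = 1 - 2 * l ^ 2 := by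
    rw [Real.cos_two_mul, Real.cos_arcsin, sq_sqrt (by nlinarith : (0:ℝ) ≤ 1 - l ^ 2)]
    ring
  have hαmem : ∠ p₁ e p₂ ∈ Set.Icc 0 π :=
    ⟨EuclideanGeometry.angle_nonneg _ _ _, EuclideanGeometry.angle_le_pi _ _ _⟩
  have hβmem : 2 * arcsin l ∈ Set.Icc 0 π := by
    constructor
    · have := Real.arcsin_nonneg.2 hl.le; linarith
    · have := Real.arcsin_le_pi_div_two l; linarith
  by_contra h
  push_neg at h
  have := Real.strictAntiOn_cos hβmem hαmem h
  rw [hcos2] at this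
  linarith

/-- Lemma 1 of the paper: if two pursuers `p₁, p₂` are at distance at least `d_c` from the
evader `e` and at most `2 d_c min(λ₁, λ₂)` from each other, then the included angle
`∠ p₁ e p₂` is at most each occupied angle `2 arcsin λᵢ`; in particular the coverage angle
`∠ p₁ e p₂ - (arcsin λ₁ + arcsin λ₂)` is nonpositive. -/
theorem coverage_angle_nonpos (e p₁ p₂ : EuclideanSpace ℝ (Fin 2)) (dc : ℝ) (hdc : 0 < dc)
    (l₁ l₂ : ℝ) (hl₁ : 0 < l₁) (hl₁' : l₁ < 1) (hl₂ : 0 < l₂) (hl₂' : l₂ < 1)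
    (h₁ : dc ≤ dist e p₁) (h₂ : dc ≤ dist e p₂)
    (h₁₂ : dist p₁ p₂ ≤ 2 * dc * min l₁ l₂) :
    ∠ p₁ e p₂ ≤ 2 * arcsin l₁ ∧ ∠ p₁ e p₂ ≤ 2 * arcsin l₂ ∧
      ∠ p₁ e p₂ - (arcsin l₁ + arcsin l₂) ≤ 0 := by
  have hm₁ : dist p₁ p₂ ≤ 2 * dc * l₁ := by
    refine h₁₂.trans ?_
    have : min l₁ l₂ ≤ l₁ := min_le_left _ _
    nlinarith
  have hm₂ : dist p₁ p₂ ≤ 2 * dc * l₂ := by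
    refine h₁₂.trans ?_
    have : min l₁ l₂ ≤ l₂ := min_le_right _ _
    nlinarith
  have hA := angle_le_two_arcsin e p₁ p₂ dc l₁ hdc hl₁ hl₁' h₁ h₂ hm₁
  have hB := angle_le_two_arcsin e p₁ p₂ dc l₂ hdc hl₂ hl₂' h₁ h₂ hm₂
  exact ⟨hA, hB, by linarith⟩
end
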